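/- arXiv:2405.19523 — 4 statements merged into one kernel-verified Lean document; each statement's English description precedes it below -/
import Mathlib

section
/- Let (S, d) be a metric space, R > 0 and s ≥ 1 a natural number. For every finite subset x ⊆ S and every u ∈ S with u ∉ x, one has Σ_{y ∈ x} (min(s, D_R(y, x ∪ {u})) − min(s, D_R(y, x))) = Σ_{y ∈ x} 1{d(u, y) ≤ R}·1{1 ≤ D_R(y, x ∪ {u}) ≤ s}. -/
open scoped Classical

/-- The neighbour count `D_R(u, z) = #{w ∈ z \ {u} : d(u, w) ≤ R}`. -/
noncomputable def neighborCount {S : Type*} [MetricSpace S]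
    (R : ℝ) (u : S) (z : Finset S) : ℕ :=
  ((z.erase u).filter (fun w => dist u w ≤ R)).card

/-- Rewriting of the Geyer interaction sum: for a saturation threshold `s ≥ 1`,
a finite configuration `x` and `u ∉ x`,
`Σ_{y ∈ x} (min(s, D_R(y, x∪{u})) − min(s, D_R(y, x)))
  = Σ_{y ∈ x} 1{d(u,y) ≤ R}·1{1 ≤ D_R(y, x∪{u}) ≤ s}`. -/
theorem geyer_interaction_sum_rewrite {S : Type*} [MetricSpace S]
    (R : ℝ) (hR : 0 < R) (s : ℕ) (hs : 1 ≤ s)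
    (x : Finset S) (u : S) (hu : u ∉ x) :
    ∑ y ∈ x, ((min s (neighborCount R y (insert u x)) : ℤ) -
        (min s (neighborCount R y x) : ℤ)) =
      ∑ y ∈ x, (if dist u y ≤ R then (1 : ℤ) else 0) *
        (if 1 ≤ neighborCount R y (insert u x) ∧ neighborCount R y (insert u x) ≤ s
          then (1 : ℤ) else 0) := by
  apply Finset.sum_congr rfl
  intro y hy
  have hne : u ≠ y := fun h => hu (h ▸ hy)
  have key : neighborCount R y (insert u x) =
      neighborCount R y x + (if dist u y ≤ R then 1 else 0) := by
    unfold neighborCount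
    rw [Finset.erase_insert_of_ne hne]
    rw [Finset.filter_insert]
    have hu' : u ∉ (x.erase y).filter (fun w => dist y w ≤ R) := fun h =>
      hu (Finset.mem_of_mem_erase (Finset.mem_of_mem_filter u h))
    by_cases hd : dist u y ≤ R
    · rw [if_pos (by rwa [dist_comm] at hd), Finset.card_insert_of_notMem hu', if_pos hd]
    · rw [if_neg (fun h => hd (by rwa [dist_comm] at h)), if_neg hd, Nat.add_zero]
  rw [key]
  by_cases hd : dist u y ≤ R
  · simp only [if_pos hd, one_mul]
    set n := neighborCount R y x with hn
    rw [show ((min (s : ℤ) ((n + 1 : ℕ) : ℤ))) = ((min s (n + 1) : ℕ) : ℤ) by push_cast [Nat.cast_min]; ring,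
      show ((min (s : ℤ) ((n : ℕ) : ℤ))) = ((min s n : ℕ) : ℤ) by push_cast [Nat.cast_min]; ring]
    by_cases hns : n + 1 ≤ s
    · rw [if_pos ⟨Nat.le_add_left 1 n, hns⟩, min_eq_right hns,
        min_eq_right (Nat.le_of_succ_le hns)]
      push_cast; ring
    · rw [if_neg (fun h => hns h.2), min_eq_left (by omega), min_eq_left (by omega)]
      ring
  · simp [hd]
end

section
/- Let (S, d) be a metric space, R > 0 and s ≥ 1 a natural number. For every finite subset x ⊆ S and every u ∈ S with u ∉ x, the Geyer exponent E_s(u, x) = min(s, D_R(u, x)) + Σ_{y ∈ x} (min(s, D_R(y, x ∪ {u})) − min(s, D_R(y, x))) satisfies 0 ≤ E_s(u, x) ≤ s + #x. Consequently, for β > 0: if γ ≥ 1 then β·γ^{E_s(u,x)} ≤ β·γ^{s + #x}, and if 0 < γ ≤ 1 then β·γ^{E_s(u,x)} ≤ β. -/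
open scoped Classical

lemma neighborCount_mono {S : Type*} [MetricSpace S]
    (R : ℝ) (y u : S) (x : Finset S) :
    neighborCount R y x ≤ neighborCount R y (insert u x) := by
  apply Finset.card_le_card
  exact Finset.filter_subset_filter _ (Finset.erase_subset_erase _ (Finset.subset_insert _ _))

lemma neighborCount_insert_le {S : Type*} [MetricSpace S]
    (R : ℝ) (y u : S) (x : Finset S) :
    neighborCount R y (insert u x) ≤ neighborCount R y x + 1 := by
  unfold neighborCount
  calc (((insert u x).erase y).filter (fun w => dist y w ≤ R)).card
      ≤ (insert u ((x.erase y).filter (fun w => dist y w ≤ R))).card := by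
        apply Finset.card_le_card
        intro w hw
        simp only [Finset.mem_filter, Finset.mem_erase, Finset.mem_insert] at hw ⊢
        rcases hw with ⟨⟨hwy, hwm⟩, hd⟩
        rcases hwm with rfl | hwx
        · exact Or.inl rfl
        · exact Or.inr ⟨⟨hwy, hwx⟩, hd⟩
    _ ≤ _ := Finset.card_insert_le _ _

/-- The Geyer exponent
`E_s(u,x) = min(s, D_R(u,x)) + Σ_{y∈x}(min(s, D_R(y, x∪{u})) − min(s, D_R(y,x)))`. -/
noncomputable def geyerExp {S : Type*} [MetricSpace S]
    (R : ℝ) (s : ℕ) (u : S) (x : Finset S) : ℤ :=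
  (min s (neighborCount R u x) : ℤ) +
    ∑ y ∈ x, ((min s (neighborCount R y (insert u x)) : ℤ) -
      (min s (neighborCount R y x) : ℤ))

/-- Local stability of the Geyer saturation model: the Geyer exponent satisfies
`0 ≤ E_s(u,x) ≤ s + #x`, hence for `β > 0` the conditional intensity
`β·γ^{E_s(u,x)}` is bounded by `β·γ^{s + #x}` when `γ ≥ 1` and by `β` when
`0 < γ ≤ 1`. -/
theorem geyer_locally_stable {S : Type*} [MetricSpace S]
    (R : ℝ) (hR : 0 < R) (s : ℕ) (hs : 1 ≤ s)
    (x : Finset S) (u : S) (hu : u ∉ x) (β : ℝ) (hβ : 0 < β) :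
    0 ≤ geyerExp R s u x ∧ geyerExp R s u x ≤ (s : ℤ) + x.card ∧
      (∀ γ : ℝ, 1 ≤ γ →
        β * γ ^ geyerExp R s u x ≤ β * γ ^ ((s : ℤ) + x.card)) ∧
      (∀ γ : ℝ, 0 < γ → γ ≤ 1 → β * γ ^ geyerExp R s u x ≤ β) := by
  have h0 : 0 ≤ geyerExp R s u x := by
    unfold geyerExp
    have hsum : (0 : ℤ) ≤ ∑ y ∈ x, ((min s (neighborCount R y (insert u x)) : ℤ) -
        (min s (neighborCount R y x) : ℤ)) := by
      apply Finset.sum_nonneg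
      intro y _
      have := neighborCount_mono R y u x
      have : min s (neighborCount R y x) ≤ min s (neighborCount R y (insert u x)) :=
        min_le_min le_rfl this
      omega
    positivity
  have h1 : geyerExp R s u x ≤ (s : ℤ) + x.card := by
    unfold geyerExp
    have h1 : (min s (neighborCount R u x) : ℤ) ≤ s := by
      exact_mod_cast min_le_left _ _
    have h2 : ∑ y ∈ x, ((min s (neighborCount R y (insert u x)) : ℤ) -
        (min s (neighborCount R y x) : ℤ)) ≤ (x.card : ℤ) := by
      calc ∑ y ∈ x, ((min s (neighborCount R y (insert u x)) : ℤ) -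
          (min s (neighborCount R y x) : ℤ)) ≤ ∑ _y ∈ x, (1 : ℤ) := by
            apply Finset.sum_le_sum
            intro y _
            have := neighborCount_insert_le R y u x
            have : min s (neighborCount R y (insert u x)) ≤ min s (neighborCount R y x) + 1 := by
              omega
            omega
        _ = (x.card : ℤ) := by simp
    linarith
  refine ⟨h0, h1, ?_, ?_⟩
  · intro γ hγ
    have : γ ^ geyerExp R s u x ≤ γ ^ ((s : ℤ) + x.card) :=
      zpow_le_zpow_right₀ hγ h1
    nlinarith [zpow_pos (lt_of_lt_of_le one_pos hγ) (geyerExp R s u x)]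
  · intro γ hγ0 hγ1
    have : γ ^ geyerExp R s u x ≤ γ ^ (0 : ℤ) :=
      zpow_le_zpow_right_of_le_one₀ hγ0 hγ1 h0
    simp only [zpow_zero] at this
    nlinarith
end

section
/- Let (S, d) be a metric space and R > 0. Let η, ζ, ξ ∈ S be three pairwise distinct points with d(η, ζ) ≤ R, d(ξ, η) ≤ R and d(ξ, ζ) ≤ R. Then the Geyer exponent with saturation threshold s = 1 satisfies E_1(ξ, {η}) = 2 and E_1(ξ, {η, ζ}) = 1. -/
open scoped Classical

/-- Core computation of van Lieshout's counterexample: for three pairwise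
distinct points `η, ζ, ξ` that are pairwise within distance `R`, the Geyer
exponent with saturation threshold `s = 1` satisfies `E_1(ξ, {η}) = 2` and
`E_1(ξ, {η, ζ}) = 1`. -/
theorem geyer_counterexample_computation {S : Type*} [MetricSpace S]
    (R : ℝ) (hR : 0 < R) (η ζ ξ : S)
    (hηζ : η ≠ ζ) (hηξ : η ≠ ξ) (hζξ : ζ ≠ ξ)
    (hd1 : dist η ζ ≤ R) (hd2 : dist ξ η ≤ R) (hd3 : dist ξ ζ ≤ R) :
    geyerExp R 1 ξ {η} = 2 ∧ geyerExp R 1 ξ {η, ζ} = 1 := by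
  have hd1' : dist ζ η ≤ R := by rwa [dist_comm]
  have hd2' : dist η ξ ≤ R := by rwa [dist_comm]
  have hd3' : dist ζ ξ ≤ R := by rwa [dist_comm]
  constructor <;>
    simp [geyerExp, neighborCount, Finset.sum_insert, Finset.sum_pair hηζ,
      Finset.erase_insert_eq_erase, Finset.erase_insert, Finset.filter_insert,
      Finset.erase_eq_of_notMem, hηζ, hηζ.symm, hηξ, hηξ.symm, hζξ, hζξ.symm,
      hd1, hd2, hd3, hd1', hd2', hd3', Finset.erase_insert_of_ne,
      Finset.erase_singleton, Finset.filter_singleton]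
end

section
/- For every β > 0, R > 0 and saturation threshold s = 1, there exist finite subsets x ⊆ y of the Euclidean plane ℝ² and a point u ∈ ℝ² with u ∉ y such that the Geyer saturation conditional intensity λ(u|z) = β·γ^{E_1(u,z)} satisfies: for every γ > 1, λ(u|x) > λ(u|y) (so the Geyer model with γ > 1 is not attractive), and for every γ ∈ (0, 1), λ(u|x) < λ(u|y) (so the Geyer model with γ < 1 is not repulsive). -/
open scoped Classical

/-!
With saturation threshold `1`, a point only records whether it has an `R`-neighbour at all.
Put `u, a, b` on a line with gaps `R`, so that `a` is a neighbour of both `u` and `b` while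
`u` and `b` are not neighbours. Adding `u` to `{a}` creates a neighbour for `u` and one for `a`,
so `E_1(u, {a}) = 2`; adding it to `{a, b}` creates one only for `u`, since `a` is already
saturated by `b`, so `E_1(u, {a, b}) = 1`. Hence `γ^{E_1}` decreases from `x = {a}` to
`y = {a, b}` when `γ > 1` and increases when `γ < 1`.
-/

section Geyer

variable {S : Type*} [MetricSpace S]

lemma min_one_neighborCount (R : ℝ) (u : S) (z : Finset S) :
    min (1 : ℤ) (neighborCount R u z) = if ∃ w ∈ z, w ≠ u ∧ dist u w ≤ R then 1 else 0 := by
  split_ifs with h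
  · obtain ⟨w, hwz, hwu, hw⟩ := h
    have : 0 < neighborCount R u z :=
      Finset.card_pos.mpr ⟨w, Finset.mem_filter.mpr ⟨Finset.mem_erase.mpr ⟨hwu, hwz⟩, hw⟩⟩
    omega
  · have : neighborCount R u z = 0 := by
      refine Finset.card_eq_zero.mpr (Finset.filter_eq_empty_iff.mpr fun w hw hwR => ?_)
      obtain ⟨hwu, hwz⟩ := Finset.mem_erase.mp hw
      exact h ⟨w, hwz, hwu, hwR⟩
    simp [this]

variable {R : ℝ} {u a b : S}

lemma ne_of_dist_le_of_lt_dist (hdua : dist u a ≤ R) (hdub : R < dist u b) : u ≠ b :=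
  dist_pos.mp (by linarith [dist_nonneg (x := u) (y := a)])

lemma geyerExp_one_singleton (hua : u ≠ a) (hdua : dist u a ≤ R) :
    geyerExp R 1 u {a} = 2 := by
  simp only [geyerExp, Finset.sum_singleton, Nat.cast_one, min_one_neighborCount]
  simp [hua, hua.symm, hdua, dist_comm a u]

lemma geyerExp_one_pair [DecidableEq S] (hua : u ≠ a) (hdua : dist u a ≤ R)
    (hdab : dist a b ≤ R) (hdub : R < dist u b) : geyerExp R 1 u {a, b} = 1 := by
  have hub : u ≠ b := ne_of_dist_le_of_lt_dist hdua hdub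
  have hab : a ≠ b := by rintro rfl; linarith
  have hdbu : ¬ dist b u ≤ R := by rw [dist_comm]; exact not_le.mpr hdub
  simp only [geyerExp, Finset.sum_pair hab, Nat.cast_one, min_one_neighborCount]
  simp [hua, hua.symm, hub, hab, hab.symm, hdua, hdab, not_le.mpr hdub, hdbu,
    dist_comm a u, dist_comm b a]

end Geyer

lemma exists_three_point_chain {E : Type*} [NormedAddCommGroup E] [NormedSpace ℝ E]
    [Nontrivial E] {R : ℝ} (hR : 0 < R) :
    ∃ u a b : E, u ≠ a ∧ dist u a ≤ R ∧ dist a b ≤ R ∧ R < dist u b := by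
  obtain ⟨v, hv⟩ := exists_norm_eq E hR.le
  refine ⟨0, v, (2 : ℝ) • v, ?_, ?_, ?_, ?_⟩
  · rintro rfl
    rw [norm_zero] at hv
    linarith
  · simp [hv]
  · rw [dist_eq_norm, ← one_smul ℝ v, smul_smul, ← sub_smul, norm_smul]
    norm_num [hv]
  · rw [dist_zero_left, norm_smul, hv]
    norm_num
    linarith

/-- The Geyer saturation model with saturation threshold `s = 1` is neither
attractive for `γ > 1` nor repulsive for `γ < 1`: in the Euclidean plane there
are finite configurations `x ⊆ y` and a location `u ∉ y` such that the Geyer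
conditional intensity `λ(u|z) = β·γ^{E_1(u,z)}` satisfies `λ(u|x) > λ(u|y)`
for every `γ > 1`, and `λ(u|x) < λ(u|y)` for every `0 < γ < 1`. -/
theorem geyer_not_attractive_not_repulsive (β R : ℝ) (hβ : 0 < β) (hR : 0 < R) :
    ∃ (x y : Finset (EuclideanSpace ℝ (Fin 2))) (u : EuclideanSpace ℝ (Fin 2)),
      x ⊆ y ∧ u ∉ y ∧
      (∀ γ : ℝ, 1 < γ → β * γ ^ geyerExp R 1 u x > β * γ ^ geyerExp R 1 u y) ∧
      (∀ γ : ℝ, 0 < γ → γ < 1 → β * γ ^ geyerExp R 1 u x < β * γ ^ geyerExp R 1 u y) := by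
  obtain ⟨u, a, b, hua, hdua, hdab, hdub⟩ :=
    exists_three_point_chain (E := EuclideanSpace ℝ (Fin 2)) hR
  have hu : u ∉ ({a, b} : Finset _) := by simp [hua, ne_of_dist_le_of_lt_dist hdua hdub]
  refine ⟨{a}, {a, b}, u, by simp, hu, fun γ hγ => ?_, fun γ hγ₀ hγ₁ => ?_⟩
  all_goals rw [geyerExp_one_singleton hua hdua, geyerExp_one_pair hua hdua hdab hdub]
  · exact mul_lt_mul_of_pos_left (zpow_lt_zpow_right₀ hγ (by norm_num)) hβ
  · exact mul_lt_mul_of_pos_left (zpow_lt_zpow_right_of_lt_one₀ hγ₀ hγ₁ (by norm_num)) hβ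
end
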